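/- Let T be an ergodic measure-preserving automorphism of a standard probability space (X, S, μ) and f : X → ℝ a Borel map. If the distributions of the random variables f(n, ·), n ≥ 1, are uniformly tight, then the recurrence set R(f) is nonempty. -/

import Mathlib

open MeasureTheory Filter Topology
open scoped ENNReal NNReal

noncomputable section

/-- The cocycle sums `f(n, x) = f(x) + f(Tx) + ⋯ + f(T^{n-1}x)` for `n ∈ ℕ`. -/
def birkhoff {X E : Type*} [AddCommMonoid E] (T : X → X) (f : X → E) (n : ℕ) (x : X) : E :=
  ∑ i ∈ Finset.range n, f (T^[i] x)

/-- A cocycle is recurrent if `liminf_{n → ∞} ‖f(n, x)‖ = 0` for a.e. `x`. -/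
def Recurrent {X E : Type*} [MeasurableSpace X] [NormedAddCommGroup E]
    (T : X → X) (f : X → E) (μ : Measure X) : Prop :=
  ∀ᵐ x ∂μ, Filter.liminf (fun n : ℕ => ‖birkhoff T f n x‖) Filter.atTop = 0

/-- The recurrence set `R(f) = {c : f - c is recurrent}`. -/
def recSet {X E : Type*} [MeasurableSpace X] [NormedAddCommGroup E]
    (T : X → X) (f : X → E) (μ : Measure X) : Set E :=
  {c | Recurrent T (fun x => f x - c) μ}

/-- The `n`-th power of the automorphism `T`, for `n : ℤ`. -/
def zIter {X : Type*} [MeasurableSpace X] (T : X ≃ᵐ X) (n : ℤ) (x : X) : X :=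
  if 0 ≤ n then (⇑T)^[n.toNat] x else (⇑T.symm)^[(-n).toNat] x

/-- The cocycle `f(n, x)` for `n : ℤ`: `f(n,x)` is the `n`-term Birkhoff sum for `n ≥ 0`,
and `f(n, x) = -f(-n, T^n x)` for `n < 0`. -/
def zcocycle {X E : Type*} [MeasurableSpace X] [AddCommGroup E] (T : X ≃ᵐ X) (f : X → E)
    (n : ℤ) (x : X) : E :=
  if 0 ≤ n then birkhoff (⇑T) f n.toNat x
  else - birkhoff (⇑T) f (-n).toNat (zIter T n x)

/-- The `n`-th power (`n : ℤ`) of the skew-product `T_f(x, g) = (Tx, f(x) + g)`,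
i.e. `T_f^n (x, g) = (T^n x, f(n, x) + g)`. -/
def zSkew {X E : Type*} [MeasurableSpace X] [AddCommGroup E] (T : X ≃ᵐ X) (f : X → E)
    (n : ℤ) (p : X × E) : X × E :=
  (zIter T n p.1, zcocycle T f n p.1 + p.2)


/-!
We show `0 ∈ R(f)`. Let `A_ε` be the set of points `x` with `|f(n, x)| ≥ ε` for all `n ≥ 1`.
If the orbit of `x` visits `A_ε` at times `m < n`, then
`|f(n, x) - f(m, x)| = |f(n - m, T^m x)| ≥ ε`, so the visit times `n` at which `|f(n, x)| ≤ K`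
give `ε`-separated points `f(n, x)` of `[-K, K]`, at most `2K/ε + 1` of them. Integrating,
`∑_{n ≤ N} μ(T^{-n} A_ε ∩ {|f(n, ·)| ≤ K})` is bounded in `N`, while by invariance and
tightness each term is at least `μ(A_ε) - δ`; hence `μ(A_ε) = 0`. Off the null set
`⋃_{m, ε} T^{-m} A_ε`, the sums starting at every point `T^m x` of the orbit come back near `0`,
and concatenating such returns gives `liminf |f(n, x)| = 0`.
-/

section Birkhoff

variable {X E : Type*}

lemma birkhoff_zero [AddCommMonoid E] (T : X → X) (f : X → E) (x : X) :
    birkhoff T f 0 x = 0 :=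
  birkhoffSum_zero T f x

lemma birkhoff_add [AddCommMonoid E] (T : X → X) (f : X → E) (m n : ℕ) (x : X) :
    birkhoff T f (m + n) x = birkhoff T f m x + birkhoff T f n (T^[m] x) :=
  birkhoffSum_add T f m n x

lemma measurable_birkhoff [MeasurableSpace X] [AddCommMonoid E] [MeasurableSpace E]
    [MeasurableAdd₂ E] {T : X → X} (hT : Measurable T) {f : X → E} (hf : Measurable f)
    (n : ℕ) : Measurable (birkhoff T f n) :=
  Finset.measurable_sum _ fun i _ => hf.comp (hT.iterate i)

end Birkhoff

lemma card_le_of_abs_le_of_separated {ι : Type*} {ε K : ℝ} (hε : 0 < ε) {v : ι → ℝ}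
    {s : Finset ι} (hK : ∀ i ∈ s, |v i| ≤ K)
    (hsep : ∀ i ∈ s, ∀ j ∈ s, i ≠ j → ε ≤ |v i - v j|) :
    s.card ≤ ⌊2 * K / ε⌋₊ + 1 := by
  have hpos : ∀ i ∈ s, 0 ≤ (v i + K) / ε := fun i hi =>
    div_nonneg (by linarith [neg_abs_le (v i), hK i hi]) hε.le
  have hmaps :
      Set.MapsTo (fun i => ⌊(v i + K) / ε⌋₊) s (Finset.range (⌊2 * K / ε⌋₊ + 1)) :=
    fun i hi => Finset.mem_range_succ_iff.mpr <| Nat.floor_le_floor <|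
      div_le_div_of_nonneg_right (by linarith [le_abs_self (v i), hK i hi]) hε.le
  have hinj : Set.InjOn (fun i => ⌊(v i + K) / ε⌋₊) s := by
    intro i hi j hj hij
    by_contra hne
    have hfloor : ⌊(v i + K) / ε⌋ = ⌊(v j + K) / ε⌋ := by
      rw [← Int.natCast_floor_eq_floor (hpos i hi), ← Int.natCast_floor_eq_floor (hpos j hj)]
      exact congrArg _ hij
    have hclose := Int.abs_sub_lt_one_of_floor_eq_floor hfloor
    rw [← sub_div, add_sub_add_right_eq_sub, abs_div, abs_of_pos hε, div_lt_one hε] at hclose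
    exact (hsep i hi j hj hne).not_gt hclose
  simpa using Finset.card_le_card_of_injOn _ hmaps hinj

lemma sum_measure_le_of_forall_card_le {X ι : Type*} [MeasurableSpace X] (μ : Measure X)
    (s : Finset ι) {D : ι → Set X} (hD : ∀ i ∈ s, MeasurableSet (D i))
    [∀ x, DecidablePred fun i => x ∈ D i] {L : ℕ}
    (hL : ∀ x, {i ∈ s | x ∈ D i}.card ≤ L) :
    ∑ i ∈ s, μ (D i) ≤ L * μ Set.univ := by
  calc ∑ i ∈ s, μ (D i) = ∫⁻ x, ∑ i ∈ s, (D i).indicator 1 x ∂μ := by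
        rw [lintegral_finsetSum _ fun i hi => measurable_one.indicator (hD i hi)]
        exact Finset.sum_congr rfl fun i hi => (lintegral_indicator_one (hD i hi)).symm
    _ ≤ ∫⁻ _, (L : ℝ≥0∞) ∂μ := lintegral_mono fun x => by
        rw [Finset.sum_indicator_eq_sum_filter]
        simpa using hL x
    _ = L * μ Set.univ := lintegral_const _

lemma exists_measure_abs_gt_lt_of_tight {X : Type*} [MeasurableSpace X] {μ : Measure X}
    [IsProbabilityMeasure μ] {g : ℕ → X → ℝ} (hg : ∀ n, Measurable (g n))
    (htight : ∀ δ : ℝ, 0 < δ → ∃ C : Set ℝ, IsCompact C ∧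
      ∀ n : ℕ, 1 ≤ n → 1 - ENNReal.ofReal δ < μ.map (g n) C)
    {δ : ℝ} (hδ : 0 < δ) :
    ∃ K, ∀ n, 1 ≤ n → μ {x | K < |g n x|} < ENNReal.ofReal δ := by
  obtain ⟨C, hC, hCδ⟩ := htight δ hδ
  obtain ⟨K, hCK⟩ := hC.isBounded.subset_closedBall 0
  refine ⟨K, fun n hn => ?_⟩
  have hsub : {x | K < |g n x|} ⊆ (g n ⁻¹' C)ᶜ := fun x hx hxC => by
    have hxK := hCK hxC
    rw [Metric.mem_closedBall, Real.dist_eq, sub_zero] at hxK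
    exact hx.not_ge hxK
  have hmap := Measure.map_apply (hg n) hC.measurableSet ▸ hCδ n hn
  calc μ {x | K < |g n x|} ≤ μ (g n ⁻¹' C)ᶜ := measure_mono hsub
    _ = 1 - μ (g n ⁻¹' C) := prob_compl_eq_one_sub (hC.measurableSet.preimage (hg n))
    _ < ENNReal.ofReal δ := ENNReal.sub_lt_of_sub_lt prob_le_one (.inl ENNReal.one_ne_top) hmap

lemma liminf_eq_zero_of_frequently_lt {u : ℕ → ℝ} (h0 : ∀ n, 0 ≤ u n)
    (h : ∀ ε > 0, ∃ᶠ n in atTop, u n < ε) : liminf u atTop = 0 := by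
  have hcobdd : IsCoboundedUnder (· ≥ ·) atTop u := ⟨1, fun a ha =>
    ((h 1 one_pos).and_eventually ha).exists.elim fun _ hn => hn.2.trans hn.1.le⟩
  refine le_antisymm (le_of_forall_gt_imp_ge_of_dense fun ε hε => ?_)
    (le_liminf_of_le hcobdd (.of_forall h0))
  exact liminf_le_of_frequently_le ((h ε hε).mono fun _ => le_of_lt)
    (isBoundedUnder_of ⟨0, h0⟩)

section NonReturn

variable {X : Type*} {T : X → X} {f : X → ℝ}

def nonReturnSet (T : X → X) (f : X → ℝ) (ε : ℝ) : Set X :=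
  {x | ∀ n, 1 ≤ n → ε ≤ |birkhoff T f n x|}

lemma measurableSet_nonReturnSet [MeasurableSpace X] (hT : Measurable T) (hf : Measurable f)
    (ε : ℝ) : MeasurableSet (nonReturnSet T f ε) := by
  simp only [nonReturnSet, Set.ofPred_forall]
  exact .iInter fun n => .iInter fun _ =>
    measurableSet_le measurable_const (measurable_birkhoff hT hf n).abs

lemma le_abs_birkhoff_sub_of_mem_nonReturnSet {ε : ℝ} {x : X} {m n : ℕ} (hmn : m < n)
    (hm : T^[m] x ∈ nonReturnSet T f ε) :
    ε ≤ |birkhoff T f n x - birkhoff T f m x| := by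
  obtain ⟨k, rfl⟩ := Nat.exists_eq_add_of_lt hmn
  rw [add_assoc, birkhoff_add, add_sub_cancel_left]
  exact hm _ (by omega)

lemma card_le_of_forall_mem_nonReturnSet {ε K : ℝ} (hε : 0 < ε) {x : X} {s : Finset ℕ}
    (hs : ∀ n ∈ s, T^[n] x ∈ nonReturnSet T f ε ∧ |birkhoff T f n x| ≤ K) :
    s.card ≤ ⌊2 * K / ε⌋₊ + 1 := by
  refine card_le_of_abs_le_of_separated hε (fun n hn => (hs n hn).2) fun m hm n hn hmn => ?_
  rcases hmn.lt_or_gt with h | h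
  · rw [abs_sub_comm]
    exact le_abs_birkhoff_sub_of_mem_nonReturnSet h (hs m hm).1
  · exact le_abs_birkhoff_sub_of_mem_nonReturnSet h (hs n hn).1

lemma liminf_norm_birkhoff_eq_zero_of_forall_exists_lt {x : X}
    (h : ∀ m, ∀ ε > 0, ∃ n, 1 ≤ n ∧ |birkhoff T f n (T^[m] x)| < ε) :
    liminf (fun n => ‖birkhoff T f n x‖) atTop = 0 := by
  have hsmall : ∀ j, ∀ ε > 0, ∃ m, j ≤ m ∧ |birkhoff T f m x| < ε := by
    intro j
    induction j with
    | zero => exact fun ε hε => ⟨0, le_rfl, by simpa [birkhoff_zero] using hε⟩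
    | succ j ih =>
      intro ε hε
      obtain ⟨m, hjm, hm⟩ := ih (ε / 2) (half_pos hε)
      obtain ⟨n, hn, hn'⟩ := h m (ε / 2) (half_pos hε)
      refine ⟨m + n, by omega, ?_⟩
      rw [birkhoff_add]
      linarith [abs_add_le (birkhoff T f m x) (birkhoff T f n (T^[m] x))]
  exact liminf_eq_zero_of_frequently_lt (fun n => norm_nonneg _) fun ε hε =>
    frequently_atTop.mpr fun j => hsmall j ε hε

variable [MeasurableSpace X] {μ : Measure X}

lemma measure_nonReturnSet_eq_zero [IsProbabilityMeasure μ] (hT : MeasurePreserving T μ μ)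
    (hf : Measurable f)
    (htight : ∀ δ : ℝ, 0 < δ → ∃ C : Set ℝ, IsCompact C ∧
      ∀ n : ℕ, 1 ≤ n → 1 - ENNReal.ofReal δ < μ.map (birkhoff T f n) C)
    {ε : ℝ} (hε : 0 < ε) :
    μ (nonReturnSet T f ε) = 0 := by
  classical
  set A := nonReturnSet T f ε
  have hA : MeasurableSet A := measurableSet_nonReturnSet hT.measurable hf ε
  by_contra hA0
  obtain ⟨δ, -, hδ0, hδA⟩ := ENNReal.lt_iff_exists_real_btwn.mp (pos_iff_ne_zero.mpr hA0)
  obtain ⟨K, hK⟩ := exists_measure_abs_gt_lt_of_tight (measurable_birkhoff hT.measurable hf)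
    htight (ENNReal.ofReal_pos.mp hδ0)
  set D : ℕ → Set X := fun n => {x | T^[n] x ∈ A ∧ |birkhoff T f n x| ≤ K}
  have hD : ∀ n, MeasurableSet (D n) := fun n =>
    (hT.measurable.iterate n hA).inter
      (measurableSet_le (measurable_birkhoff hT.measurable hf n).abs measurable_const)
  have hD_large : ∀ n, 1 ≤ n → μ A - ENNReal.ofReal δ ≤ μ (D n) := fun n hn => by
    refine tsub_le_iff_right.mpr ?_
    calc μ A = μ (T^[n] ⁻¹' A) := ((hT.iterate n).measure_preimage hA.nullMeasurableSet).symm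
      _ ≤ μ (D n ∪ {x | K < |birkhoff T f n x|}) := measure_mono fun x hx => by
          by_cases hxK : |birkhoff T f n x| ≤ K
          · exact .inl ⟨hx, hxK⟩
          · exact .inr (not_le.mp hxK)
      _ ≤ μ (D n) + ENNReal.ofReal δ :=
          (measure_union_le _ _).trans (add_le_add_right (hK n hn).le _)
  obtain ⟨N, hN⟩ := ENNReal.exists_nat_mul_gt (tsub_pos_iff_lt.mpr hδA).ne'
    (ENNReal.natCast_ne_top (⌊2 * K / ε⌋₊ + 1))
  refine hN.not_ge ?_
  calc (N : ℝ≥0∞) * (μ A - ENNReal.ofReal δ)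
      ≤ ∑ n ∈ Finset.Icc 1 N, μ (D n) := by
        simpa using Finset.card_nsmul_le_sum _ _ _ fun n hn =>
          hD_large n (Finset.mem_Icc.mp hn).1
    _ ≤ (⌊2 * K / ε⌋₊ + 1 : ℕ) * μ Set.univ :=
        sum_measure_le_of_forall_card_le μ _ (fun n _ => hD n) fun x =>
          card_le_of_forall_mem_nonReturnSet hε fun n hn => (Finset.mem_filter.mp hn).2
    _ = _ := by rw [measure_univ, mul_one]

lemma recurrent_of_measure_nonReturnSet_eq_zero (hT : MeasurePreserving T μ μ)
    (hA : ∀ ε > 0, μ (nonReturnSet T f ε) = 0) : Recurrent T f μ := by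
  have hae : ∀ᵐ x ∂μ, ∀ m k : ℕ, T^[m] x ∉ nonReturnSet T f (1 / (k + 1)) :=
    ae_all_iff.mpr fun m => ae_all_iff.mpr fun k => (hT.iterate m).quasiMeasurePreserving.ae
      (measure_eq_zero_iff_ae_notMem.mp (hA _ Nat.one_div_pos_of_nat))
  filter_upwards [hae] with x hx
  refine liminf_norm_birkhoff_eq_zero_of_forall_exists_lt fun m ε hε => ?_
  obtain ⟨k, hk⟩ := exists_nat_one_div_lt hε
  simp only [nonReturnSet, Set.mem_ofPred_eq, not_forall, not_le] at hx
  obtain ⟨n, hn, hlt⟩ := hx m k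
  exact ⟨n, hn, hlt.trans hk⟩

end NonReturn

theorem stmt11_general {X : Type*} [MeasurableSpace X]
    (μ : Measure X) [IsProbabilityMeasure μ] (T : X ≃ᵐ X) (hT : Ergodic (⇑T) μ)
    (f : X → ℝ) (hf : Measurable f)
    (htight : ∀ δ : ℝ, 0 < δ → ∃ C : Set ℝ, IsCompact C ∧
      ∀ n : ℕ, 1 ≤ n → 1 - ENNReal.ofReal δ < μ.map (birkhoff (⇑T) f n) C) :
    (recSet (⇑T) f μ).Nonempty := by
  refine ⟨0, ?_⟩
  simp only [recSet, sub_zero, Set.mem_ofPred_eq]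
  exact recurrent_of_measure_nonReturnSet_eq_zero hT.toMeasurePreserving fun ε hε =>
    measure_nonReturnSet_eq_zero hT.toMeasurePreserving hf htight hε

theorem stmt11 {X : Type*} [MeasurableSpace X] [StandardBorelSpace X]
    (μ : Measure X) [IsProbabilityMeasure μ] (T : X ≃ᵐ X) (hT : Ergodic (⇑T) μ)
    (f : X → ℝ) (hf : Measurable f)
    (htight : ∀ δ : ℝ, 0 < δ → ∃ C : Set ℝ, IsCompact C ∧
      ∀ n : ℕ, 1 ≤ n → 1 - ENNReal.ofReal δ < μ.map (birkhoff (⇑T) f n) C) :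
    (recSet (⇑T) f μ).Nonempty :=
  stmt11_general μ T hT f hf htight
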